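/- Let m, n be positive integers and let F be a set of edges of the m×n grid graph. Then F is a forcing set for every proper 3-coloring of the grid graph (i.e., F is controlling) if and only if the spanning subgraph of the grid graph with vertex set V and edge set F is connected (equivalently, F contains the edge set of a spanning tree of the grid graph). -/

import Mathlib

/-- Two vertices of the `m × n` grid graph are adjacent:
`(i,j)` is adjacent to `(i',j')` iff `|i-i'| + |j-j'| = 1`. -/
def GridAdj {m n : ℕ} (u v : Fin m × Fin n) : Prop :=
  |(u.1.val : ℤ) - (v.1.val : ℤ)| + |(u.2.val : ℤ) - (v.2.val : ℤ)| = 1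

/-- A proper `3`-coloring of the `m × n` grid graph. -/
def IsProperColoring {m n : ℕ} (c : Fin m × Fin n → ZMod 3) : Prop :=
  ∀ u v, GridAdj u v → c u ≠ c v

/-- The set of (unordered) edges of the `m × n` grid graph. -/
def GridEdges (m n : ℕ) : Set (Sym2 (Fin m × Fin n)) :=
  {e | ∃ u v, GridAdj u v ∧ e = s(u, v)}

/-- `F` is a forcing set for the proper `3`-coloring `c`: the only proper
`3`-coloring agreeing with `c` at the base vertex `v₀ = (0,0)` and having the same
color differences as `c` across every edge of `F` is `c` itself. -/
def IsForcing {m n : ℕ} [NeZero m] [NeZero n] (c : Fin m × Fin n → ZMod 3)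
    (F : Set (Sym2 (Fin m × Fin n))) : Prop :=
  ∀ c' : Fin m × Fin n → ZMod 3, IsProperColoring c' →
    c' (0, 0) = c (0, 0) →
    (∀ u v : Fin m × Fin n, GridAdj u v → s(u, v) ∈ F → c' v - c' u = c v - c u) →
    c' = c

/-- The checkerboard `3`-coloring of the grid, corresponding to the standard
Miura-ori mountain-valley assignment. -/
def checkerboard {m n : ℕ} : Fin m × Fin n → ZMod 3 :=
  fun v => if (v.1.val + v.2.val) % 2 = 0 then 0 else 1

/-- The spanning subgraph of the `m × n` grid graph whose edges are the grid edges
belonging to `F`. -/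
def spanningSubgraph {m n : ℕ} (F : Set (Sym2 (Fin m × Fin n))) :
    SimpleGraph (Fin m × Fin n) where
  Adj u v := GridAdj u v ∧ s(u, v) ∈ F
  symm := by
    constructor
    intro u v h
    refine ⟨?_, ?_⟩
    · unfold GridAdj at h ⊢
      rw [abs_sub_comm, abs_sub_comm ((v.2.val : ℤ))]
      exact h.1
    · rw [Sym2.eq_swap]
      exact h.2
  loopless := by
    constructor
    intro v h
    have h1 := h.1
    unfold GridAdj at h1
    simp at h1

/-!
If `F` spans a connected subgraph, the difference `c' - c` of two colorings as in `IsForcing`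
is constant along `F`-edges, hence everywhere, and vanishes at `v₀`.

Conversely, let `B` be the set of vertices not reachable from `v₀` through `F`. Viewing
3-colorings as height functions mod 3, take the height
`h v = min_{k ∈ B} (‖v - k‖₁ + parity k)`: it changes by exactly `1` along grid edges, equals
the parity on `B` and is positive off `B`, so every grid edge entering `B` goes down by one.
Hence `c = h mod 3` stays proper after adding `2` on `B`, and this second coloring has the same
differences as `c` across every edge of `F`, none of which leaves `B`.
-/

theorem SimpleGraph.Reachable.eq_of_forall_adj {V β : Type*} {G : SimpleGraph V} {f : V → β}
    (hf : ∀ u v, G.Adj u v → f u = f v) {a b : V} (h : G.Reachable a b) : f a = f b := by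
  rw [SimpleGraph.reachable_iff_reflTransGen] at h
  induction h with
  | refl => rfl
  | tail _ hadj ih => exact ih.trans (hf _ _ hadj)

section GridHeight

variable {m n : ℕ}

def gridDist (u v : Fin m × Fin n) : ℕ :=
  ((u.1 : ℤ) - v.1).natAbs + ((u.2 : ℤ) - v.2).natAbs

def gridParity (v : Fin m × Fin n) : ℕ := (v.1 + v.2) % 2

theorem gridAdj_iff_gridDist_eq_one (u v : Fin m × Fin n) : GridAdj u v ↔ gridDist u v = 1 := by
  unfold GridAdj gridDist
  rw [Int.abs_eq_natAbs, Int.abs_eq_natAbs]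
  omega

theorem gridDist_comm (u v : Fin m × Fin n) : gridDist u v = gridDist v u := by
  unfold gridDist; omega

theorem gridDist_eq_zero {u v : Fin m × Fin n} : gridDist u v = 0 ↔ u = v := by
  refine ⟨fun h => ?_, fun h => by subst h; unfold gridDist; omega⟩
  unfold gridDist at h
  exact Prod.ext (Fin.ext (by omega)) (Fin.ext (by omega))

theorem gridDist_triangle (u v w : Fin m × Fin n) :
    gridDist u w ≤ gridDist u v + gridDist v w := by
  unfold gridDist; omega

theorem gridDist_mod_two (u v : Fin m × Fin n) :
    gridDist u v % 2 = (gridParity u + gridParity v) % 2 := by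
  unfold gridDist gridParity; omega

theorem gridParity_lt_two (v : Fin m × Fin n) : gridParity v < 2 := Nat.mod_lt _ two_pos

noncomputable def gridHeight (B : Set (Fin m × Fin n)) (v : Fin m × Fin n) : ℕ :=
  sInf ((fun k => gridDist v k + gridParity k) '' B)

variable {B : Set (Fin m × Fin n)}

theorem gridHeight_le {k : Fin m × Fin n} (hk : k ∈ B) (v : Fin m × Fin n) :
    gridHeight B v ≤ gridDist v k + gridParity k :=
  Nat.sInf_le ⟨k, hk, rfl⟩

theorem exists_gridHeight_eq (hB : B.Nonempty) (v : Fin m × Fin n) :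
    ∃ k ∈ B, gridHeight B v = gridDist v k + gridParity k := by
  obtain ⟨k, hk, he⟩ := Nat.sInf_mem (hB.image fun k => gridDist v k + gridParity k)
  exact ⟨k, hk, he.symm⟩

theorem gridHeight_mod_two (hB : B.Nonempty) (v : Fin m × Fin n) :
    gridHeight B v % 2 = gridParity v := by
  obtain ⟨k, -, he⟩ := exists_gridHeight_eq hB v
  have := gridDist_mod_two v k
  have := gridParity_lt_two v
  have := gridParity_lt_two k
  omega

theorem gridHeight_of_mem {v : Fin m × Fin n} (hv : v ∈ B) : gridHeight B v = gridParity v := by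
  have hle := gridHeight_le hv v
  rw [gridDist_eq_zero.mpr rfl] at hle
  have := gridHeight_mod_two ⟨v, hv⟩ v
  omega

theorem one_le_gridHeight_of_notMem (hB : B.Nonempty) {u : Fin m × Fin n} (hu : u ∉ B) :
    1 ≤ gridHeight B u := by
  obtain ⟨k, hk, he⟩ := exists_gridHeight_eq hB u
  have : gridDist u k ≠ 0 := fun h0 => hu (gridDist_eq_zero.mp h0 ▸ hk)
  omega

theorem gridHeight_le_add_one (hB : B.Nonempty) {u v : Fin m × Fin n} (huv : gridDist u v = 1) :
    gridHeight B u ≤ gridHeight B v + 1 := by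
  obtain ⟨k, hk, he⟩ := exists_gridHeight_eq hB v
  have := gridHeight_le hk u
  have := gridDist_triangle u v k
  omega

theorem gridHeight_adj (hB : B.Nonempty) {u v : Fin m × Fin n} (huv : GridAdj u v) :
    gridHeight B u = gridHeight B v + 1 ∨ gridHeight B v = gridHeight B u + 1 := by
  rw [gridAdj_iff_gridDist_eq_one] at huv
  have := gridHeight_le_add_one hB huv
  have := gridHeight_le_add_one hB ((gridDist_comm v u).trans huv)
  have := gridHeight_mod_two hB u
  have := gridHeight_mod_two hB v
  have := gridDist_mod_two u v
  omega

theorem gridHeight_adj_of_notMem_of_mem {u v : Fin m × Fin n} (huv : GridAdj u v) (hu : u ∉ B)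
    (hv : v ∈ B) : gridHeight B u = gridHeight B v + 1 := by
  have := gridHeight_adj ⟨v, hv⟩ huv
  have := gridHeight_of_mem hv
  have := one_le_gridHeight_of_notMem ⟨v, hv⟩ hu
  have := gridParity_lt_two v
  omega

theorem exists_isProperColoring_descending_into (hB : B.Nonempty) :
    ∃ c : Fin m × Fin n → ZMod 3, IsProperColoring c ∧
      ∀ u v, GridAdj u v → u ∉ B → v ∈ B → c u = c v + 1 := by
  refine ⟨fun v => (gridHeight B v : ZMod 3), fun u v huv => ?_,
    fun u v huv hu hv => by
      simp only [gridHeight_adj_of_notMem_of_mem huv hu hv, Nat.cast_succ]⟩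
  have hne : ∀ x : ZMod 3, x + 1 ≠ x := by decide
  rcases gridHeight_adj hB huv with h | h <;> simp only [h, Nat.cast_succ]
  · exact hne _
  · exact (hne _).symm

end GridHeight

theorem GridAdj.symm {m n : ℕ} {u v : Fin m × Fin n} (h : GridAdj u v) : GridAdj v u := by
  rwa [gridAdj_iff_gridDist_eq_one, gridDist_comm, ← gridAdj_iff_gridDist_eq_one]

theorem IsProperColoring.add_indicator {m n : ℕ} {c : Fin m × Fin n → ZMod 3}
    (hc : IsProperColoring c) {B : Set (Fin m × Fin n)}
    (hB : ∀ u v, GridAdj u v → u ∉ B → v ∈ B → c u = c v + 1) :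
    IsProperColoring (c + B.indicator 2) := by
  intro u v huv
  have hne : ∀ x : ZMod 3, x + 2 ≠ x + 1 := by decide
  simp only [Pi.add_apply]
  by_cases hu : u ∈ B <;> by_cases hv : v ∈ B <;>
    simp only [Set.indicator_of_mem, Set.indicator_of_notMem, hu, hv, not_false_eq_true,
      Pi.ofNat_apply, add_zero]
  · exact fun h => hc u v huv (add_right_cancel h)
  · rw [hB v u huv.symm hv hu]; exact hne _
  · rw [hB u v huv hu hv]; exact (hne _).symm
  · exact hc u v huv

theorem isForcing_of_connected {m n : ℕ} [NeZero m] [NeZero n] {F : Set (Sym2 (Fin m × Fin n))}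
    (hF : (spanningSubgraph F).Connected) (c : Fin m × Fin n → ZMod 3) : IsForcing c F := by
  intro c' _ hbase hdiff
  funext v
  have hconst : c' (0, 0) - c (0, 0) = c' v - c v :=
    (hF.preconnected (0, 0) v).eq_of_forall_adj (f := fun w => c' w - c w) fun x y hxy => by
      linear_combination -hdiff x y hxy.1 hxy.2
  linear_combination -hconst + hbase

theorem exists_not_isForcing_of_not_connected {m n : ℕ} [NeZero m] [NeZero n]
    {F : Set (Sym2 (Fin m × Fin n))} (hF : ¬ (spanningSubgraph F).Connected) :
    ∃ c, IsProperColoring c ∧ ¬ IsForcing c F := by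
  set G := spanningSubgraph F
  set B := {w | ¬ G.Reachable (0, 0) w}
  obtain ⟨b, hb⟩ : B.Nonempty := by
    by_contra! h
    refine hF ((SimpleGraph.connected_iff_exists_forall_reachable G).mpr ⟨(0, 0), fun w => ?_⟩)
    simpa [B] using Set.eq_empty_iff_forall_notMem.mp h w
  obtain ⟨c, hc, hdesc⟩ := exists_isProperColoring_descending_into ⟨b, hb⟩
  have hbase : (0, 0) ∉ B := fun h => h (SimpleGraph.Reachable.refl _)
  have hclosed : ∀ u v, G.Adj u v → (u ∈ B ↔ v ∈ B) := fun u v huv =>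
    not_congr ⟨fun h => h.trans huv.reachable, fun h => h.trans huv.reachable.symm⟩
  refine ⟨c, hc, fun hforce => ?_⟩
  have hcb := congrFun (hforce _ (hc.add_indicator hdesc)
    (by simp [Set.indicator_of_notMem hbase]) fun u v huv huvF => ?_) b
  · simp only [Pi.add_apply, Set.indicator_of_mem hb] at hcb
    exact (by decide : ∀ x : ZMod 3, x + 2 ≠ x) _ hcb
  · have hind : B.indicator (2 : Fin m × Fin n → ZMod 3) u = B.indicator 2 v :=
      Set.indicator_eq_indicator (hclosed u v ⟨huv, huvF⟩) rfl
    simp only [Pi.add_apply, hind]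
    ring

theorem controlling_iff_spanning_connected_general {m n : ℕ} [NeZero m] [NeZero n]
    (F : Set (Sym2 (Fin m × Fin n))) :
    (∀ c : Fin m × Fin n → ZMod 3, IsProperColoring c → IsForcing c F) ↔
      (spanningSubgraph F).Connected := by
  refine ⟨fun hctrl => ?_, fun hF c _ => isForcing_of_connected hF c⟩
  by_contra hF
  obtain ⟨c, hc, hnf⟩ := exists_not_isForcing_of_not_connected hF
  exact hnf (hctrl c hc)

/-- **Theorem 5 of the paper.** A set `F` of grid edges is controlling (a forcing
set for every proper 3-coloring of the `m × n` grid graph) if and only if the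
spanning subgraph with edge set `F` is connected, i.e. `F` contains a spanning tree
of the grid graph. -/
theorem controlling_iff_spanning_connected {m n : ℕ} [NeZero m] [NeZero n]
    (F : Set (Sym2 (Fin m × Fin n))) (hFE : F ⊆ GridEdges m n) :
    (∀ c : Fin m × Fin n → ZMod 3, IsProperColoring c → IsForcing c F) ↔
      (spanningSubgraph F).Connected :=
  controlling_iff_spanning_connected_general F
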